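/- arXiv:2508.17915 — 3 statements merged into one kernel-verified Lean document; each statement's English description precedes it below -/
import Mathlib

section
/- Let d ≥ 2 be an integer. Then the real sequence a ↦ (2^d · F(d, a−1)) / ((2a+1)^d − E(d−2, a)) converges, as a → ∞, to Alt(d)/d!, where Alt(d) is the number of alternating permutations of {1,…,d} (the Euler zigzag number). -/
/-- `FibPts d k` : the number of integer points `x = (x_1, …, x_d)` with
`0 ≤ x_i ≤ k` and `x_i + x_{i+1} ≤ k` for consecutive indices, i.e. the number of
lattice points in the `k`-th dilation of the `d`-dimensional Fibonacci polytope. -/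
noncomputable def FibPts (d k : ℕ) : ℕ :=
  Set.ncard {x : Fin d → ℤ | (∀ i, 0 ≤ x i ∧ x i ≤ (k : ℤ)) ∧
    ∀ i j : Fin d, (j : ℕ) = (i : ℕ) + 1 → x i + x j ≤ (k : ℤ)}

/-- `ExtFibPts d k` : the number of integer points `x = (x_1, …, x_d)` with
`|x_i| ≤ k` and `|x_i| + |x_{i+1}| ≤ k` for consecutive indices, i.e. the number of
lattice points in the `k`-th dilation of the `d`-dimensional extended Fibonacci polytope. -/
noncomputable def ExtFibPts (d k : ℕ) : ℕ :=
  Set.ncard {x : Fin d → ℤ | (∀ i, |x i| ≤ (k : ℤ)) ∧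
    ∀ i j : Fin d, (j : ℕ) = (i : ℕ) + 1 → |x i| + |x j| ≤ (k : ℤ)}

/-- A permutation `σ` of `Fin d` (thought of as `{1, …, d}`) is alternating if
`σ(1) > σ(2) < σ(3) > σ(4) < ⋯`.  In 0-based indexing: for consecutive indices
`i, j = i+1`, if `i` is even then `σ i > σ j`, and if `i` is odd then `σ i < σ j`. -/
def IsAlternating {d : ℕ} (σ : Equiv.Perm (Fin d)) : Prop :=
  ∀ i j : Fin d, (j : ℕ) = (i : ℕ) + 1 →
    (((i : ℕ) % 2 = 0 → σ j < σ i) ∧ ((i : ℕ) % 2 = 1 → σ i < σ j))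

/-- `Alt d` : the number of alternating permutations of `{1, …, d}` (Euler zigzag number). -/
noncomputable def Alt (d : ℕ) : ℕ :=
  Nat.card {σ : Equiv.Perm (Fin d) // IsAlternating σ}

/-!
Reflecting the odd-indexed coordinates `x_1, x_3, …` as `x_i ↦ k - x_i` maps the lattice points
of the `k`-th Fibonacci polytope bijectively onto the weakly zigzag sequences
`y_1 ≥ y_2 ≤ y_3 ≥ ⋯` with values in `{0, …, k}`. An injective sequence is the increasing
enumeration of its `d`-element value set composed with a permutation, and it zigzags exactly when
the permutation is alternating; so there are `Alt d * (k+1).choose d` injective ones, while the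
non-injective sequences number at most `(k+1)^d - (k+1)k⋯(k-d+2) = o(k^d)`.
Hence `F(d, a-1) ~ Alt d * a^d / d!`. In the denominator, `E(d-2, a) ≤ (2a+1)^(d-2) = o(a^d)`,
so it is asymptotic to `(2a)^d`.
-/

open Function Filter Topology Asymptotics

namespace Tuple

lemma sort_orderEmbedding_comp {α : Type*} [LinearOrder α] {n : ℕ} (g : Fin n ↪o α)
    (σ : Equiv.Perm (Fin n)) : sort (g ∘ σ) = σ.symm := by
  have h := unique_monotone (f := g ∘ σ) (σ := σ.symm) (τ := sort (g ∘ σ))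
    (by simpa [comp_assoc] using g.monotone) (monotone_sort _)
  exact (Equiv.coe_fn_injective ((g.injective.comp σ.injective).comp_left h)).symm

end Tuple

namespace Function.Embedding

variable {α : Type*} [LinearOrder α] {n : ℕ}

lemma strictMono_comp_sort (f : Fin n ↪ α) : StrictMono (f ∘ Tuple.sort f) :=
  (Tuple.monotone_sort f).strictMono_of_injective (f.injective.comp (Tuple.sort f).injective)

def equivPermProdOrderEmbedding : (Fin n ↪ α) ≃ Equiv.Perm (Fin n) × (Fin n ↪o α) where
  toFun f := ((Tuple.sort f).symm, OrderEmbedding.ofStrictMono _ (strictMono_comp_sort f))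
  invFun p := p.1.toEmbedding.trans p.2.toEmbedding
  left_inv f := by ext i; simp
  right_inv p := by
    obtain ⟨σ, g⟩ := p
    have h : Tuple.sort (σ.toEmbedding.trans g.toEmbedding) = σ.symm :=
      Tuple.sort_orderEmbedding_comp g σ
    ext i <;> simp [h]

end Function.Embedding

/-- `IsAlternating σ` is by definition `IsZigzag (· < ·) σ`. -/
def IsZigzag {α : Type*} (r : α → α → Prop) {n : ℕ} (y : Fin n → α) : Prop :=
  ∀ i j : Fin n, (j : ℕ) = (i : ℕ) + 1 →
    ((i : ℕ) % 2 = 0 → r (y j) (y i)) ∧ ((i : ℕ) % 2 = 1 → r (y i) (y j))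

section Zigzag

variable {α β : Type*} {n : ℕ}

lemma isZigzag_comp_iff {r : α → α → Prop} {s : β → β → Prop} {g : α → β}
    (hg : ∀ a b, s (g a) (g b) ↔ r a b) {y : Fin n → α} :
    IsZigzag s (g ∘ y) ↔ IsZigzag r y := by
  simp only [IsZigzag, comp_apply, hg]

lemma isZigzag_le_iff_lt [PartialOrder α] {y : Fin n → α} (hy : Injective y) :
    IsZigzag (· ≤ ·) y ↔ IsZigzag (· < ·) y := by
  refine forall₂_congr fun i j => imp_congr_right fun hij => ?_
  have hne : y i ≠ y j := hy.ne (Fin.ne_of_val_ne (by omega))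
  simp only [le_iff_lt_or_eq, hne, hne.symm, or_false]

variable (α) [Fintype α] [LinearOrder α] (n)

theorem ncard_injective_isZigzag :
    {y : Fin n → α | Injective y ∧ IsZigzag (· ≤ ·) y}.ncard =
      Alt n * (Fintype.card α).choose n := by
  rw [← Nat.card_coe_set_eq]
  calc Nat.card {y : Fin n → α // Injective y ∧ IsZigzag (· ≤ ·) y}
      = Nat.card {f : Fin n ↪ α // IsZigzag (· < ·) f} :=
        Nat.card_congr <| (Equiv.subtypeSubtypeEquivSubtypeInter _ _).symm.trans <|
          Equiv.subtypeEquiv (Equiv.subtypeInjectiveEquivEmbedding _ _)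
            fun y => isZigzag_le_iff_lt y.2
    _ = Nat.card {p : Equiv.Perm (Fin n) × (Fin n ↪o α) // IsAlternating p.1} :=
        Nat.card_congr <| (Equiv.subtypeEquiv Embedding.equivPermProdOrderEmbedding.symm
          fun p => (isZigzag_comp_iff (g := p.2) fun a b => p.2.lt_iff_lt).symm).symm
    _ = Alt n * (Fintype.card α).choose n := by
      rw [Nat.card_congr Equiv.prodSubtypeFstEquivSubtypeProd, Nat.card_prod,
        Nat.card_congr Set.powersetCard.ofFinEmbEquiv, Set.powersetCard.card,
        Nat.card_eq_fintype_card (α := α), Alt]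

theorem ncard_not_injective :
    {y : Fin n → α | ¬ Injective y}.ncard =
      Fintype.card α ^ n - (Fintype.card α).descFactorial n := by
  classical
  change Nat.card {y : Fin n → α // ¬ Injective y} = _
  rw [Nat.card_eq_fintype_card, Fintype.card_subtype_compl,
    Fintype.card_congr (Equiv.subtypeInjectiveEquivEmbedding _ _), Fintype.card_embedding_eq,
    Fintype.card_fun, Fintype.card_fin]

theorem le_ncard_isZigzag :
    Alt n * (Fintype.card α).choose n ≤ {y : Fin n → α | IsZigzag (· ≤ ·) y}.ncard :=
  ncard_injective_isZigzag α n ▸ Set.ncard_le_ncard fun _ hy => hy.2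

theorem ncard_isZigzag_le :
    {y : Fin n → α | IsZigzag (· ≤ ·) y}.ncard ≤
      Alt n * (Fintype.card α).choose n +
        (Fintype.card α ^ n - (Fintype.card α).descFactorial n) :=
  calc {y : Fin n → α | IsZigzag (· ≤ ·) y}.ncard
      ≤ ({y | Injective y ∧ IsZigzag (· ≤ ·) y} ∪ {y | ¬ Injective y}).ncard :=
        Set.ncard_le_ncard fun y hy => by by_cases h : Injective y <;> simp_all
    _ ≤ _ := by
      rw [← ncard_injective_isZigzag, ← ncard_not_injective]
      exact Set.ncard_union_le _ _

end Zigzag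

def reflectEven (k : ℤ) {d : ℕ} (x : Fin d → ℤ) : Fin d → ℤ :=
  fun i => if (i : ℕ) % 2 = 0 then k - x i else x i

lemma reflectEven_involutive (k : ℤ) (d : ℕ) : Involutive (reflectEven k (d := d)) :=
  fun x => funext fun i => by unfold reflectEven; split_ifs <;> ring

lemma ncard_forall_mem_and_isZigzag {α : Type*} [Preorder α] (s : Set α) (n : ℕ) :
    {y : Fin n → α | (∀ i, y i ∈ s) ∧ IsZigzag (· ≤ ·) y}.ncard =
      {y : Fin n → s | IsZigzag (· ≤ ·) y}.ncard := by
  have himage : {y : Fin n → α | (∀ i, y i ∈ s) ∧ IsZigzag (· ≤ ·) y} =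
      (Subtype.val ∘ ·) '' {y : Fin n → s | IsZigzag (· ≤ ·) y} := by
    ext y
    constructor
    · rintro ⟨hs, hy⟩
      exact ⟨fun i => ⟨y i, hs i⟩, hy, rfl⟩
    · rintro ⟨y, hy, rfl⟩
      exact ⟨fun i => (y i).2, hy⟩
  rw [himage, Set.ncard_image_of_injective _ Subtype.val_injective.comp_left]

theorem fibPts_eq_ncard_isZigzag (d k : ℕ) :
    FibPts d k = {y : Fin d → Set.Icc (0 : ℤ) k | IsZigzag (· ≤ ·) y}.ncard := by
  have hreflect : {x : Fin d → ℤ | (∀ i, 0 ≤ x i ∧ x i ≤ (k : ℤ)) ∧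
      ∀ i j : Fin d, (j : ℕ) = (i : ℕ) + 1 → x i + x j ≤ (k : ℤ)} =
      reflectEven k ⁻¹'
        {y | (∀ i, y i ∈ Set.Icc 0 (k : ℤ)) ∧ IsZigzag (· ≤ ·) y} := by
    ext x
    simp only [Set.mem_ofPred_eq, Set.mem_preimage, Set.mem_Icc, IsZigzag, reflectEven]
    refine and_congr (forall_congr' fun i => ?_)
      (forall₂_congr fun i j => imp_congr_right fun hij => ?_) <;>
    split_ifs <;> omega
  rw [FibPts, hreflect, ← (reflectEven_involutive k d).image_eq_preimage_symm,
    Set.ncard_image_of_injective _ (reflectEven_involutive k d).injective,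
    ncard_forall_mem_and_isZigzag]

theorem fibPts_bounds (d k : ℕ) :
    Alt d * (k + 1).choose d ≤ FibPts d k ∧
      FibPts d k ≤ Alt d * (k + 1).choose d + ((k + 1) ^ d - (k + 1).descFactorial d) := by
  have hcard : Fintype.card (Set.Icc (0 : ℤ) k) = k + 1 := by simp
  rw [fibPts_eq_ncard_isZigzag, ← hcard]
  exact ⟨le_ncard_isZigzag _ d, ncard_isZigzag_le _ d⟩

lemma tendsto_descFactorial_div_pow (d : ℕ) :
    Tendsto (fun a : ℕ => (a.descFactorial d : ℝ) / (a : ℝ) ^ d) atTop (𝓝 1) := by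
  have hne : ∀ᶠ a : ℕ in atTop, (a : ℝ) ^ d ≠ 0 :=
    eventually_atTop.mpr ⟨1, fun a ha => pow_ne_zero _ (Nat.cast_ne_zero.mpr (by omega))⟩
  exact (isEquivalent_iff_tendsto_one hne).mp (isEquivalent_descFactorial d)

theorem tendsto_fibPts_div_pow (d : ℕ) :
    Tendsto (fun a : ℕ => (FibPts d (a - 1) : ℝ) / (a : ℝ) ^ d) atTop
      (𝓝 ((Alt d : ℝ) / d.factorial)) := by
  set c : ℝ := (Alt d : ℝ) / d.factorial with hc_def
  set D : ℕ → ℝ := fun a => (a.descFactorial d : ℝ) / (a : ℝ) ^ d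
  have hbounds : ∀ a ≥ 1, c * D a ≤ (FibPts d (a - 1) : ℝ) / (a : ℝ) ^ d ∧
      (FibPts d (a - 1) : ℝ) / (a : ℝ) ^ d ≤ c * D a + (1 - D a) := by
    intro a ha
    have hpos : (0 : ℝ) < (a : ℝ) ^ d := by positivity
    have hle : a.descFactorial d ≤ a ^ d := Nat.descFactorial_le_pow _ _
    have hc : c * a.descFactorial d = ((Alt d * a.choose d : ℕ) : ℝ) := by
      rw [hc_def, Nat.descFactorial_eq_factorial_mul_choose]
      push_cast
      field_simp
    have hlow : c * D a = ((Alt d * a.choose d : ℕ) : ℝ) / (a : ℝ) ^ d := by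
      rw [← hc, mul_div_assoc]
    have hup : c * D a + (1 - D a) =
        ((Alt d * a.choose d + (a ^ d - a.descFactorial d) : ℕ) : ℝ) / (a : ℝ) ^ d := by
      rw [hlow, Nat.cast_add, Nat.cast_sub hle, add_div, sub_div, Nat.cast_pow, div_self hpos.ne']
    obtain ⟨hF₁, hF₂⟩ := fibPts_bounds d (a - 1)
    rw [Nat.sub_add_cancel ha] at hF₁ hF₂
    rw [hup, hlow]
    exact ⟨div_le_div_of_nonneg_right (by exact_mod_cast hF₁) hpos.le,
      div_le_div_of_nonneg_right (by exact_mod_cast hF₂) hpos.le⟩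
  have hD : Tendsto D atTop (𝓝 1) := tendsto_descFactorial_div_pow d
  have hlim₁ : Tendsto (fun a => c * D a) atTop (𝓝 c) := by simpa using hD.const_mul c
  have hlim₂ : Tendsto (fun a => c * D a + (1 - D a)) atTop (𝓝 c) := by
    simpa using (hD.const_mul c).add ((tendsto_const_nhds (x := (1 : ℝ))).sub hD)
  exact tendsto_of_tendsto_of_tendsto_of_le_of_le' hlim₁ hlim₂
    (eventually_atTop.mpr ⟨1, fun a ha => (hbounds a ha).1⟩)
    (eventually_atTop.mpr ⟨1, fun a ha => (hbounds a ha).2⟩)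

lemma extFibPts_le (m k : ℕ) : ExtFibPts m k ≤ (2 * k + 1) ^ m := by
  have hbox : {x : Fin m → ℤ | (∀ i, |x i| ≤ (k : ℤ)) ∧
      ∀ i j : Fin m, (j : ℕ) = (i : ℕ) + 1 → |x i| + |x j| ≤ (k : ℤ)} ⊆
      ↑(Fintype.piFinset fun _ : Fin m => Finset.Icc (-(k : ℤ)) k) :=
    fun x hx => Finset.mem_coe.mpr <| Fintype.mem_piFinset.mpr fun i =>
      Finset.mem_Icc.mpr (abs_le.mp (hx.1 i))
  calc ExtFibPts m k ≤ (↑(Fintype.piFinset fun _ : Fin m => Finset.Icc (-(k : ℤ)) k) :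
        Set (Fin m → ℤ)).ncard := Set.ncard_le_ncard hbox (Finset.finite_toSet _)
    _ = (2 * k + 1) ^ m := by
      rw [Set.ncard_coe_finset, Fintype.card_piFinset, Finset.prod_const, Int.card_Icc,
        Finset.card_univ, Fintype.card_fin]
      congr 1
      omega

theorem tendsto_extFibPts_div_pow {m d : ℕ} (h : m < d) :
    Tendsto (fun a : ℕ => (ExtFibPts m a : ℝ) / (a : ℝ) ^ d) atTop (𝓝 0) := by
  have hO : (fun a : ℕ => (ExtFibPts m a : ℝ)) =O[atTop] fun a => (a : ℝ) ^ m := by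
    refine IsBigO.of_bound (3 ^ m) (eventually_atTop.mpr ⟨1, fun a ha => ?_⟩)
    have h3 : (2 * a + 1 : ℝ) ≤ 3 * a := by
      have : (1 : ℝ) ≤ a := by exact_mod_cast ha
      linarith
    calc ‖(ExtFibPts m a : ℝ)‖ = ExtFibPts m a := Real.norm_natCast _
      _ ≤ (2 * a + 1 : ℝ) ^ m := by exact_mod_cast extFibPts_le m a
      _ ≤ (3 * a : ℝ) ^ m := by gcongr
      _ = 3 ^ m * ‖(a : ℝ) ^ m‖ := by rw [mul_pow, norm_pow, Real.norm_natCast]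
  exact (hO.trans_isLittleO ((isLittleO_pow_pow_atTop_of_lt h).comp_tendsto
    tendsto_natCast_atTop_atTop)).tendsto_div_nhds_zero

theorem stmt6 (d : ℕ) (hd : 2 ≤ d) :
    Filter.Tendsto
      (fun a : ℕ =>
        (2^d * (FibPts d (a-1) : ℝ)) / ((2*(a : ℝ)+1)^d - (ExtFibPts (d-2) a : ℝ)))
      Filter.atTop
      (nhds ((Alt d : ℝ) / (Nat.factorial d : ℝ))) := by
  have hbase : Tendsto (fun a : ℕ => (2 * (a : ℝ) + 1) / (a : ℝ)) atTop (𝓝 2) := by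
    have h := (tendsto_const_nhds (x := (2 : ℝ))).add
      (tendsto_inv_atTop_nhds_zero_nat (𝕜 := ℝ))
    rw [add_zero] at h
    refine h.congr' (eventually_atTop.mpr ⟨1, fun a ha => ?_⟩)
    have : (a : ℝ) ≠ 0 := by positivity
    field_simp
  have hden : Tendsto (fun a : ℕ => (2 * (a : ℝ) + 1) ^ d / (a : ℝ) ^ d -
      (ExtFibPts (d - 2) a : ℝ) / (a : ℝ) ^ d) atTop (𝓝 (2 ^ d)) := by
    simpa [div_pow] using (hbase.pow d).sub (tendsto_extFibPts_div_pow (by omega : d - 2 < d))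
  have hlim := ((tendsto_fibPts_div_pow d).const_mul (2 ^ d)).div hden (by positivity)
  rw [mul_div_cancel_left₀ _ (by positivity)] at hlim
  refine hlim.congr' (eventually_atTop.mpr ⟨1, fun a ha => ?_⟩)
  have : (a : ℝ) ^ d ≠ 0 := by positivity
  rw [Pi.div_apply, ← sub_div, mul_div_assoc', div_div_div_cancel_right₀ this]
end

section
/- For every integer d ≥ 1, one has 3 · E(d, 1) = 2^{d+2} − (−1)^d; that is, the number of integer points of the d-dimensional extended Fibonacci polytope is the Jacobsthal number (2^{d+2} − (−1)^d)/3. -/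
/-!
Split a lattice point of the `(d + 2)`-dimensional polytope (`k = 1`) by its first coordinate.
If it is `0`, the remaining coordinates form an arbitrary point of dimension `d + 1`; if it is
`±1`, the adjacency constraint forces the second coordinate to be `0`, and the remaining ones
form an arbitrary point of dimension `d`. Hence `E(d + 2, 1) = E(d + 1, 1) + 2 E(d, 1)`, the
Jacobsthal recurrence, and `E(0, 1) = 1`, `E(1, 1) = 3` fix the closed form.
-/

def extFibSet (d k : ℕ) : Set (Fin d → ℤ) :=
  {x | (∀ i, |x i| ≤ (k : ℤ)) ∧
    ∀ i j : Fin d, (j : ℕ) = (i : ℕ) + 1 → |x i| + |x j| ≤ (k : ℤ)}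

theorem extFibPts_eq_ncard (d k : ℕ) : ExtFibPts d k = (extFibSet d k).ncard := rfl

theorem Fin.cons_mem_image_cons {d : ℕ} {α : Type*} {a b : α} {y : Fin d → α}
    {s : Set (Fin d → α)} :
    (Fin.cons a y : Fin (d + 1) → α) ∈ Fin.cons b '' s ↔ a = b ∧ y ∈ s := by
  simp only [Set.mem_image, Fin.cons_inj]
  aesop

theorem Fin.disjoint_image_cons {d : ℕ} {α : Type*} {a b : α} (hab : a ≠ b)
    (s t : Set (Fin d → α)) :
    Disjoint (Fin.cons a '' s : Set (Fin (d + 1) → α)) (Fin.cons b '' t) := by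
  rw [Set.disjoint_left]
  rintro _ ⟨y, -, rfl⟩ hy
  exact hab (Fin.cons_mem_image_cons.mp hy).1

namespace extFibSet

variable {d k : ℕ}

theorem finite (d k : ℕ) : (extFibSet d k).Finite :=
  (Set.Finite.pi fun _ : Fin d => Set.finite_Icc (-k : ℤ) k).subset
    fun _ hx i _ => abs_le.mp (hx.1 i)

theorem cons_mem {a : ℤ} {y : Fin d → ℤ} :
    Fin.cons a y ∈ extFibSet (d + 1) k ↔
      |a| ≤ k ∧ y ∈ extFibSet d k ∧ ∀ i : Fin d, (i : ℕ) = 0 → |a| + |y i| ≤ k := by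
  constructor
  · rintro ⟨hbound, hadj⟩
    refine ⟨by simpa using hbound 0, ⟨fun i => by simpa using hbound i.succ, fun i j hij => ?_⟩,
      fun i hi => by simpa using hadj 0 i.succ (by simp [hi])⟩
    simpa using hadj i.succ j.succ (by simp [hij])
  · rintro ⟨ha, ⟨hbound, hadj⟩, hhead⟩
    refine ⟨Fin.cases (by simpa) fun i => by simpa using hbound i, fun i j hij => ?_⟩
    cases j using Fin.cases with
    | zero => simp at hij
    | succ j =>
      cases i using Fin.cases with
      | zero => simpa using hhead j (by simpa using hij)
      | succ i => simpa using hadj i j (by simpa using hij)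

theorem cons_zero_mem {y : Fin d → ℤ} :
    Fin.cons 0 y ∈ extFibSet (d + 1) k ↔ y ∈ extFibSet d k := by
  rw [cons_mem]
  exact ⟨fun h => h.2.1, fun hy => ⟨by simp, hy, fun i _ => by simpa using hy.1 i⟩⟩

theorem cons_cons_mem {a b : ℤ} {z : Fin d → ℤ} :
    Fin.cons a (Fin.cons b z) ∈ extFibSet (d + 2) k ↔
      |a| + |b| ≤ k ∧ Fin.cons b z ∈ extFibSet (d + 1) k := by
  rw [cons_mem]
  constructor
  · rintro ⟨-, hy, hhead⟩
    exact ⟨by simpa using hhead 0 rfl, hy⟩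
  · rintro ⟨hab, hy⟩
    refine ⟨by linarith [abs_nonneg b], hy, fun i hi => ?_⟩
    obtain rfl : i = 0 := Fin.ext hi
    rwa [Fin.cons_zero]

theorem succ_succ_one :
    extFibSet (d + 2) 1 = Fin.cons 0 '' extFibSet (d + 1) 1 ∪
      (Fin.cons 1 '' (Fin.cons 0 '' extFibSet d 1) ∪
        Fin.cons (-1) '' (Fin.cons 0 '' extFibSet d 1)) := by
  ext x
  induction x using Fin.consCases with | _ a y => ?_
  induction y using Fin.consCases with | _ b z => ?_
  simp only [Set.mem_union, Fin.cons_mem_image_cons, cons_cons_mem]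
  constructor
  · rintro ⟨hab, hy⟩
    obtain rfl | ⟨ha, rfl⟩ : a = 0 ∨ (a = 1 ∨ a = -1) ∧ b = 0 := by
      cases abs_cases a <;> cases abs_cases b <;> omega
    · exact Or.inl ⟨rfl, hy⟩
    · rw [cons_zero_mem] at hy
      tauto
  · rintro (⟨rfl, hy⟩ | ⟨rfl, rfl, hz⟩ | ⟨rfl, rfl, hz⟩)
    · exact ⟨by simpa using hy.1 0, hy⟩
    all_goals exact ⟨by simp, cons_zero_mem.mpr hz⟩

theorem ncard_succ_succ_one :
    (extFibSet (d + 2) 1).ncard = (extFibSet (d + 1) 1).ncard + 2 * (extFibSet d 1).ncard := by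
  have hfin : (Fin.cons 0 '' extFibSet d 1 : Set (Fin (d + 1) → ℤ)).Finite :=
    (finite d 1).image _
  have hdisj : Disjoint (Fin.cons 0 '' extFibSet (d + 1) 1)
      (Fin.cons 1 '' (Fin.cons 0 '' extFibSet d 1) ∪
        Fin.cons (-1) '' (Fin.cons 0 '' extFibSet d 1)) :=
    Set.disjoint_union_right.mpr
      ⟨Fin.disjoint_image_cons (by norm_num) _ _, Fin.disjoint_image_cons (by norm_num) _ _⟩
  rw [succ_succ_one, Set.ncard_union_eq hdisj ((finite _ 1).image _)
      ((hfin.image _).union (hfin.image _)),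
    Set.ncard_union_eq (Fin.disjoint_image_cons (by norm_num) _ _) (hfin.image _) (hfin.image _)]
  simp only [Set.ncard_image_of_injective _ (Fin.cons_right_injective _)]
  ring

theorem ncard_zero (k : ℕ) : (extFibSet 0 k).ncard = 1 := by
  have h : extFibSet 0 k = Set.univ := Set.eq_univ_of_forall fun _ => ⟨finZeroElim, finZeroElim⟩
  rw [h, Set.ncard_univ, Nat.card_unique]

theorem ncard_one (k : ℕ) : (extFibSet 1 k).ncard = 2 * k + 1 := by
  have h : extFibSet 1 k = Function.const (Fin 1) '' Set.Icc (-k : ℤ) k := by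
    ext x
    constructor
    · exact fun hx => ⟨x 0, abs_le.mp (hx.1 0), funext fun i => by rw [Subsingleton.elim i 0]; rfl⟩
    rintro ⟨a, ha, rfl⟩
    exact ⟨fun _ => abs_le.mpr ha, fun i j hij => by omega⟩
  rw [h, Set.ncard_image_of_injective _ Function.const_injective, ← Finset.coe_Icc,
    Set.ncard_coe_finset, Int.card_Icc]
  omega

end extFibSet

theorem extFibPts_succ_succ_one (d : ℕ) :
    ExtFibPts (d + 2) 1 = ExtFibPts (d + 1) 1 + 2 * ExtFibPts d 1 :=
  extFibSet.ncard_succ_succ_one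

theorem stmt14_general (d : ℕ) :
    (3 * ExtFibPts d 1 : ℤ) = 2^(d+2) - (-1)^d := by
  induction d using Nat.twoStepInduction with
  | zero => simp [extFibPts_eq_ncard, extFibSet.ncard_zero]
  | one => norm_num [extFibPts_eq_ncard, extFibSet.ncard_one]
  | more d ih₀ ih₁ =>
    rw [extFibPts_succ_succ_one]
    push_cast
    linear_combination ih₁ + 2 * ih₀

theorem stmt14 (d : ℕ) (hd : 1 ≤ d) :
    (3 * ExtFibPts d 1 : ℤ) = 2^(d+2) - (-1)^d :=
  stmt14_general d
end

section
/- Let n ≥ 1 and 0 ≤ k ≤ n−1 be integers. For a subset S ⊆ {1,…,n−1}, let R(S) = {x ∈ [0,1]^n : x_i + x_{i+1} > 1 for all i ∈ S, and x_i + x_{i+1} < 1 for all i ∈ {1,…,n−1} \ S}. Then Σ_{S ⊆ {1,…,n−1}, |S| = k} vol(R(S)) = A(n,k)/n!, where vol denotes Lebesgue measure on ℝ^n. -/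
/-!
Reflecting every second coordinate, `y_i = x_i` for even `i` and `y_i = 1 - x_i` for odd `i`
(counted from 0), preserves the unit cube and Lebesgue measure, and turns `x_i + x_{i+1} - 1`
into `±(y_i - y_{i+1})`, the sign alternating with `i`. So `R(S)` becomes the set of `y` in the
cube whose alternating descent set is `S`. Off the null set where two coordinates agree, the cube
is the disjoint union of the `n!` order simplices `{y | y a < y b ↔ σ a < σ b}`; permuting
coordinates permutes them, so each has volume `1 / n!`, and on the simplex of `σ` the alternating
descent set of `y` is that of `σ`. Hence `vol R(S) = #{σ | altDes σ = S} / n!`, and summing over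
`|S| = k` counts the permutations with `k` alternating descents.
-/

/-- `altDescents π` : the number of alternating descents of the permutation `π` of
`{1, …, n}`, i.e. the number of indices `i ∈ {1, …, n−1}` such that either `i` is odd and
`π(i) > π(i+1)`, or `i` is even and `π(i) < π(i+1)`.  In 0-based indexing, a 1-based odd
index corresponds to an even index. -/
noncomputable def altDescents {n : ℕ} (π : Equiv.Perm (Fin n)) : ℕ :=
  Nat.card {p : Fin n × Fin n // (p.2 : ℕ) = (p.1 : ℕ) + 1 ∧
    (((p.1 : ℕ) % 2 = 0 ∧ π p.2 < π p.1) ∨ ((p.1 : ℕ) % 2 = 1 ∧ π p.1 < π p.2))}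

/-- `A n k` : the number of permutations of `{1, …, n}` with exactly `k` alternating
descents. -/
noncomputable def altDescentCount (n k : ℕ) : ℕ :=
  Nat.card {π : Equiv.Perm (Fin n) // altDescents π = k}

/-- The region `R(S) ⊆ [0,1]^n` determined by a set `S ⊆ {1, …, n−1}` of 1-based indices:
for `i ∈ S` we require `x_i + x_{i+1} > 1` and for `i ∉ S` we require `x_i + x_{i+1} < 1`.
In 0-based indexing the pair `(i, j)` with `j = i + 1` corresponds to the 1-based index
`i + 1`. -/
def Rregion (n : ℕ) (S : Finset ℕ) : Set (Fin n → ℝ) :=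
  {x | (∀ i, 0 ≤ x i ∧ x i ≤ 1) ∧
    ∀ i j : Fin n, (j : ℕ) = (i : ℕ) + 1 →
      (((i : ℕ) + 1 ∈ S → 1 < x i + x j) ∧ ((i : ℕ) + 1 ∉ S → x i + x j < 1))}

open MeasureTheory Set Function
open scoped Nat

theorem Equiv.Perm.eq_of_forall_lt_iff {n : ℕ} {σ τ : Equiv.Perm (Fin n)}
    (h : ∀ a b, σ a < σ b ↔ τ a < τ b) : σ = τ := by
  rw [eq_comm, ← mul_inv_eq_one, ← Equiv.Perm.monotone_iff]
  intro a b hab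
  rw [← not_lt, Equiv.Perm.mul_apply, Equiv.Perm.mul_apply, ← h]
  simpa using hab

section Combinatorics

variable {n : ℕ} {α β : Type*} [LinearOrder α] [LinearOrder β]

def IsAltDescent (f : Fin n → α) (i j : Fin n) : Prop :=
  (j : ℕ) = (i : ℕ) + 1 ∧ (((i : ℕ) % 2 = 0 ∧ f j < f i) ∨ ((i : ℕ) % 2 = 1 ∧ f i < f j))

/-- The alternating descents of `f`, as 1-based positions in `{1, …, n - 1}`. -/
noncomputable def altDescentSet (f : Fin n → α) : Finset ℕ :=
  open Classical in
  (Finset.univ.filter fun p : Fin n × Fin n => IsAltDescent f p.1 p.2).image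
    fun p => (p.1 : ℕ) + 1

theorem mem_altDescentSet {f : Fin n → α} {m : ℕ} :
    m ∈ altDescentSet f ↔ ∃ i j, IsAltDescent f i j ∧ (i : ℕ) + 1 = m := by
  simp [altDescentSet]

theorem succ_mem_altDescentSet_iff {f : Fin n → α} {i j : Fin n} (hij : (j : ℕ) = i + 1) :
    (i : ℕ) + 1 ∈ altDescentSet f ↔ IsAltDescent f i j := by
  refine ⟨?_, fun hd => mem_altDescentSet.mpr ⟨i, j, hd, rfl⟩⟩
  rw [mem_altDescentSet]
  rintro ⟨i', j', hd, hi⟩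
  obtain rfl : i' = i := Fin.ext (by omega)
  obtain rfl : j' = j := Fin.ext (by have := hd.1; omega)
  exact hd

theorem altDescentSet_subset (f : Fin n → α) : altDescentSet f ⊆ Finset.Icc 1 (n - 1) := by
  intro m hm
  obtain ⟨i, j, ⟨hij, -⟩, rfl⟩ := mem_altDescentSet.mp hm
  have := j.isLt
  rw [Finset.mem_Icc]
  omega

theorem altDescentSet_eq_iff {f : Fin n → α} {S : Finset ℕ} (hS : S ⊆ Finset.Icc 1 (n - 1)) :
    altDescentSet f = S ↔
      ∀ i j : Fin n, (j : ℕ) = i + 1 → ((i : ℕ) + 1 ∈ S ↔ IsAltDescent f i j) := by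
  refine ⟨fun h i j hij => h ▸ succ_mem_altDescentSet_iff hij, fun h => ?_⟩
  ext m
  by_cases hm : m ∈ Finset.Icc 1 (n - 1)
  · rw [Finset.mem_Icc] at hm
    obtain ⟨i, rfl⟩ : ∃ i : Fin n, (i : ℕ) + 1 = m := ⟨⟨m - 1, by omega⟩, by simp; omega⟩
    have hij : ((⟨i + 1, by omega⟩ : Fin n) : ℕ) = i + 1 := rfl
    rw [succ_mem_altDescentSet_iff hij, h _ _ hij]
  · exact iff_of_false (fun h' => hm (altDescentSet_subset f h')) (fun h' => hm (hS h'))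

theorem altDescentSet_congr {f : Fin n → α} {g : Fin n → β} (h : ∀ a b, f a < f b ↔ g a < g b) :
    altDescentSet f = altDescentSet g := by
  ext m
  simp only [mem_altDescentSet, IsAltDescent, h]

theorem card_altDescentSet (π : Equiv.Perm (Fin n)) : (altDescentSet π).card = altDescents π := by
  classical
  rw [altDescentSet, Finset.card_image_of_injOn, altDescents, Nat.card_eq_fintype_card,
    Fintype.card_subtype]
  · congr
  · rintro ⟨i, j⟩ hp ⟨i', j'⟩ hp' h
    obtain ⟨hj : (j : ℕ) = i + 1, -⟩ := (Finset.mem_filter.mp hp).2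
    obtain ⟨hj' : (j' : ℕ) = i' + 1, -⟩ := (Finset.mem_filter.mp hp').2
    have hi : (i : ℕ) = i' := by simpa using h
    exact Prod.ext (Fin.ext hi) (Fin.ext (show (j : ℕ) = j' by omega))

theorem altDescentCount_eq_sum (n k : ℕ) :
    altDescentCount n k = ∑ S ∈ Finset.powersetCard k (Finset.Icc 1 (n - 1)),
      (Finset.univ.filter fun σ : Equiv.Perm (Fin n) => altDescentSet σ = S).card := by
  classical
  have hcount : altDescentCount n k =
      (Finset.univ.filter fun σ : Equiv.Perm (Fin n) => (altDescentSet σ).card = k).card := by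
    simp only [altDescentCount, card_altDescentSet, Nat.card_eq_fintype_card,
      Fintype.card_subtype]
  rw [hcount, Finset.card_eq_sum_card_fiberwise fun σ hσ =>
    Finset.mem_powersetCard.mpr ⟨altDescentSet_subset _, (Finset.mem_filter.mp hσ).2⟩]
  refine Finset.sum_congr rfl fun S hS => ?_
  rw [Finset.filter_filter]
  congr 1
  refine Finset.filter_congr fun σ _ => ⟨And.right, fun h => ⟨?_, h⟩⟩
  rw [h, (Finset.mem_powersetCard.mp hS).2]

end Combinatorics

section Geometry

variable {n : ℕ}

def orderSimplex (σ : Equiv.Perm (Fin n)) : Set (Fin n → ℝ) :=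
  Icc 0 1 ∩ {y | ∀ a b, y a < y b ↔ σ a < σ b}

theorem measurableSet_orderSimplex (σ : Equiv.Perm (Fin n)) : MeasurableSet (orderSimplex σ) :=
  measurableSet_Icc.inter (measurableSet_setOfPred.mpr (by fun_prop))

theorem injective_of_mem_orderSimplex {σ : Equiv.Perm (Fin n)} {y : Fin n → ℝ}
    (hy : y ∈ orderSimplex σ) : Injective y := fun a b hab =>
  σ.injective (le_antisymm (not_lt.mp fun h => ((hy.2 b a).mpr h).ne' hab)
    (not_lt.mp fun h => ((hy.2 a b).mpr h).ne hab))

theorem pairwise_disjoint_orderSimplex :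
    Pairwise (Disjoint on orderSimplex (n := n)) :=
  fun _ _ hne => Set.disjoint_left.mpr fun _ hσ hτ =>
    hne (Equiv.Perm.eq_of_forall_lt_iff fun a b => (hσ.2 a b).symm.trans (hτ.2 a b))

theorem mem_orderSimplex_sort_inv {y : Fin n → ℝ} (hy : y ∈ Icc 0 1) (hinj : Injective y) :
    y ∈ orderSimplex (Tuple.sort y)⁻¹ := by
  have hmono : StrictMono (y ∘ Tuple.sort y) :=
    (Tuple.monotone_sort y).strictMono_of_injective (hinj.comp (Tuple.sort y).injective)
  refine ⟨hy, fun a b => ?_⟩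
  simpa using hmono.lt_iff_lt (a := (Tuple.sort y)⁻¹ a) (b := (Tuple.sort y)⁻¹ b)

theorem ae_injective : ∀ᵐ y : Fin n → ℝ, Injective y := by
  have hne : ∀ i j : Fin n, i ≠ j → ∀ᵐ y : Fin n → ℝ, y i ≠ y j := by
    intro i j hij
    let L : (Fin n → ℝ) →ₗ[ℝ] ℝ :=
      (LinearMap.proj i : (Fin n → ℝ) →ₗ[ℝ] ℝ) - LinearMap.proj j
    have hL : LinearMap.ker L ≠ ⊤ := by
      intro h
      have := LinearMap.mem_ker.mp (h ▸ Submodule.mem_top : (Pi.single i 1 : Fin n → ℝ) ∈ _)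
      simp [L, hij.symm] at this
    have hker : {y : Fin n → ℝ | ¬y i ≠ y j} = LinearMap.ker L := by
      ext y
      simp [L, sub_eq_zero]
    rw [ae_iff, hker]
    exact Measure.addHaar_submodule volume _ hL
  have : ∀ᵐ y : Fin n → ℝ, ∀ i j, i ≠ j → y i ≠ y j := by
    simpa only [ae_all_iff, Filter.eventually_imp_distrib_left] using hne
  filter_upwards [this] with y hy i j hij
  by_contra h
  exact hy i j h hij

theorem volume_eq_sum_inter_orderSimplex {A : Set (Fin n → ℝ)} (hA : MeasurableSet A)
    (hA' : A ⊆ Icc 0 1) : volume A = ∑ σ, volume (A ∩ orderSimplex σ) := by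
  have hae : A =ᵐ[volume] ⋃ σ, A ∩ orderSimplex σ := by
    refine Filter.eventuallyEq_set.mpr ?_
    filter_upwards [ae_injective] with y hy
    simp only [mem_iUnion, mem_inter_iff, exists_and_left, iff_self_and]
    exact fun hyA => ⟨_, mem_orderSimplex_sort_inv (hA' hyA) hy⟩
  rw [measure_congr hae, measure_iUnion ?_ fun σ => hA.inter (measurableSet_orderSimplex σ),
    tsum_fintype]
  exact fun σ τ hστ =>
    (pairwise_disjoint_orderSimplex hστ).mono inter_subset_right inter_subset_right

theorem volume_orderSimplex_mul (σ ρ : Equiv.Perm (Fin n)) :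
    volume (orderSimplex (σ * ρ)) = volume (orderSimplex σ) := by
  rw [← (volume_preserving_arrowCongr' ρ.symm (MeasurableEquiv.refl ℝ)
    (MeasurePreserving.id volume)).measure_preimage_equiv]
  congr 1
  ext y
  simp only [MeasurableEquiv.arrowCongr', Equiv.arrowCongr', MeasurableEquiv.coe_mk, orderSimplex,
    Equiv.Perm.coe_mul, comp_apply, preimage_inter, preimage_ofPred_eq, Equiv.arrowCongr_apply,
    EquivLike.coe_coe, Equiv.symm_symm, MeasurableEquiv.refl_apply, mem_inter_iff, mem_preimage,
    mem_Icc, Pi.le_def, Pi.zero_apply, Pi.one_apply, mem_ofPred_eq]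
  exact and_congr (and_congr (ρ.forall_congr_right (q := fun i => 0 ≤ y i))
      (ρ.forall_congr_right (q := fun i => y i ≤ 1)))
    ((forall_congr' fun a =>
        ρ.forall_congr_right (q := fun b => y (ρ a) < y b ↔ σ (ρ a) < σ b)).trans
      (ρ.forall_congr_right (q := fun a => ∀ b, y a < y b ↔ σ a < σ b)))

theorem volume_orderSimplex (σ : Equiv.Perm (Fin n)) :
    volume (orderSimplex σ) = (n ! : ENNReal)⁻¹ := by
  have hvol : ∀ τ, volume (orderSimplex τ) = volume (orderSimplex (1 : Equiv.Perm (Fin n))) :=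
    fun τ => by simpa using volume_orderSimplex_mul 1 τ
  have hcube := volume_eq_sum_inter_orderSimplex
    (measurableSet_Icc (a := (0 : Fin n → ℝ)) (b := 1)) subset_rfl
  simp only [inter_eq_right.mpr (fun y hy => hy.1 : orderSimplex _ ⊆ Icc 0 1), hvol,
    Finset.sum_const, Finset.card_univ, Fintype.card_perm, Fintype.card_fin, nsmul_eq_mul,
    Real.volume_Icc_pi] at hcube
  rw [hvol]
  exact ENNReal.eq_inv_of_mul_eq_one_left (by simpa [mul_comm] using hcube.symm)

end Geometry

section Reflection

variable {n : ℕ}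

def reflectOdd (y : Fin n → ℝ) (i : Fin n) : ℝ :=
  if (i : ℕ) % 2 = 0 then y i else 1 - y i

theorem measurePreserving_reflectOdd (n : ℕ) : MeasurePreserving (reflectOdd (n := n)) := by
  refine volume_preserving_pi
    (f := fun (i : Fin n) (t : ℝ) => if (i : ℕ) % 2 = 0 then t else 1 - t) fun i => ?_
  by_cases h : (i : ℕ) % 2 = 0
  · simp only [h, ↓reduceIte]
    exact MeasurePreserving.id volume
  · simp only [h, ↓reduceIte]
    exact Measure.measurePreserving_sub_left volume 1

theorem reflectOdd_mem_Icc_iff {y : Fin n → ℝ} : reflectOdd y ∈ Icc 0 1 ↔ y ∈ Icc 0 1 := by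
  simp only [mem_Icc, Pi.le_def, Pi.zero_apply, Pi.one_apply, ← forall_and]
  refine forall_congr' fun i => ?_
  unfold reflectOdd
  split_ifs
  · rfl
  · constructor <;> rintro ⟨h₀, h₁⟩ <;> constructor <;> linarith

theorem one_lt_reflectOdd_add_iff {y : Fin n → ℝ} {i j : Fin n} (hij : (j : ℕ) = i + 1) :
    1 < reflectOdd y i + reflectOdd y j ↔ IsAltDescent y i j := by
  rw [IsAltDescent, and_iff_right hij]
  rcases Nat.mod_two_eq_zero_or_one (i : ℕ) with h | h
  · simp only [reflectOdd, h, show (j : ℕ) % 2 ≠ 0 by omega, ↓reduceIte, true_and, zero_ne_one,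
      false_and, or_false]
    constructor <;> intro <;> linarith
  · simp only [reflectOdd, h, show (j : ℕ) % 2 = 0 by omega, ↓reduceIte, one_ne_zero, true_and,
      false_and, false_or]
    constructor <;> intro <;> linarith

theorem reflectOdd_add_ne_one {y : Fin n → ℝ} {i j : Fin n} (hij : (j : ℕ) = i + 1)
    (hy : y i ≠ y j) : reflectOdd y i + reflectOdd y j ≠ 1 := by
  intro hsum
  apply hy
  rcases Nat.mod_two_eq_zero_or_one (i : ℕ) with h | h
  · simp only [reflectOdd, h, show (j : ℕ) % 2 ≠ 0 by omega, ↓reduceIte] at hsum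
    linarith
  · simp only [reflectOdd, h, show (j : ℕ) % 2 = 0 by omega, ↓reduceIte, one_ne_zero] at hsum
    linarith

theorem reflectOdd_mem_Rregion_iff {y : Fin n → ℝ} {S : Finset ℕ}
    (hS : S ⊆ Finset.Icc 1 (n - 1)) (hy : y ∈ Icc 0 1) (hinj : Injective y) :
    reflectOdd y ∈ Rregion n S ↔ altDescentSet y = S := by
  have hIcc : ∀ i, 0 ≤ reflectOdd y i ∧ reflectOdd y i ≤ 1 := by
    simpa [mem_Icc, Pi.le_def, forall_and] using reflectOdd_mem_Icc_iff.mpr hy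
  rw [altDescentSet_eq_iff hS, Rregion, mem_ofPred_eq]
  simp only [hIcc, implies_true, true_and]
  refine forall₂_congr fun i j => imp_congr_right fun hij => ?_
  have hne := reflectOdd_add_ne_one (y := y) hij (hinj.ne fun h => by simp [h] at hij)
  rw [← one_lt_reflectOdd_add_iff hij, ← not_le, le_iff_lt_or_eq, or_iff_left hne]
  tauto

theorem reflectOdd_preimage_Rregion_inter_orderSimplex {S : Finset ℕ}
    (hS : S ⊆ Finset.Icc 1 (n - 1)) (σ : Equiv.Perm (Fin n)) :
    reflectOdd ⁻¹' Rregion n S ∩ orderSimplex σ =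
      if altDescentSet σ = S then orderSimplex σ else ∅ := by
  have key : ∀ y ∈ orderSimplex σ, reflectOdd y ∈ Rregion n S ↔ altDescentSet σ = S :=
    fun y hy => by
      rw [reflectOdd_mem_Rregion_iff hS hy.1 (injective_of_mem_orderSimplex hy),
        altDescentSet_congr hy.2]
  split_ifs with h
  · exact inter_eq_right.mpr fun y hy => (key y hy).mpr h
  · exact eq_empty_of_forall_notMem fun y ⟨hyR, hy⟩ => h ((key y hy).mp hyR)

theorem volume_Rregion {S : Finset ℕ} (hS : S ⊆ Finset.Icc 1 (n - 1)) :
    volume (Rregion n S) =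
      (Finset.univ.filter fun σ : Equiv.Perm (Fin n) => altDescentSet σ = S).card / n ! := by
  have hR : MeasurableSet (Rregion n S) := measurableSet_setOfPred.mpr (by fun_prop)
  have hsub : reflectOdd ⁻¹' Rregion n S ⊆ Icc 0 1 := fun y hy =>
    reflectOdd_mem_Icc_iff.mp (by simpa [mem_Icc, Pi.le_def, forall_and] using hy.1)
  rw [← (measurePreserving_reflectOdd n).measure_preimage hR.nullMeasurableSet,
    volume_eq_sum_inter_orderSimplex (hR.preimage (measurePreserving_reflectOdd n).measurable) hsub]
  simp only [reflectOdd_preimage_Rregion_inter_orderSimplex hS, apply_ite volume, measure_empty,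
    volume_orderSimplex]
  rw [← Finset.sum_filter, Finset.sum_const, nsmul_eq_mul, div_eq_mul_inv]

end Reflection

theorem stmt16_general (n k : ℕ) :
    ∑ S ∈ Finset.powersetCard k (Finset.Icc 1 (n-1)), MeasureTheory.volume (Rregion n S)
      = (altDescentCount n k : ENNReal) / (Nat.factorial n : ENNReal) := by
  rw [altDescentCount_eq_sum, Nat.cast_sum, div_eq_mul_inv, Finset.sum_mul]
  refine Finset.sum_congr rfl fun S hS => ?_
  rw [volume_Rregion (Finset.mem_powersetCard.mp hS).1, div_eq_mul_inv]

theorem stmt16 (n k : ℕ) (hn : 1 ≤ n) (hk : k ≤ n - 1) :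
    ∑ S ∈ Finset.powersetCard k (Finset.Icc 1 (n-1)), MeasureTheory.volume (Rregion n S)
      = (altDescentCount n k : ENNReal) / (Nat.factorial n : ENNReal) :=
  stmt16_general n k
end
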